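/- There exists a universal constant c > 0 such that for every integer n ≥ 2, P( Z < c · ln n ) ≤ 1 / ln n. -/

import Mathlib

open MeasureTheory ProbabilityTheory Filter

/-- The Markov chain modeling the CD-P heuristic (unbounded reach), driven by a
sequence `U` of i.i.d. uniform random variables on `[0,1]`: it starts at `n`, and from a
state `m ≥ 1` it jumps to a uniformly chosen state in `{0, …, m-1}` (state `0` is absorbing). -/
noncomputable def chainR {Ω : Type*} (n : ℕ) (U : ℕ → Ω → ℝ) : ℕ → Ω → ℕ
  | 0 => fun _ => n
  | (t + 1) => fun ω => ⌊(chainR n U t ω : ℝ) * U (t + 1) ω⌋₊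

/-- `hitZ n U` is the hitting time of `0` for the chain `chainR n U`. -/
noncomputable def hitZ {Ω : Type*} (n : ℕ) (U : ℕ → Ω → ℝ) (ω : Ω) : ℕ :=
  sInf {t | chainR n U t ω = 0}

/-! Since `R_{t+1} = ⌊R_t U_{t+1}⌋`, one has `n ∏_{i ≤ t} U_i - t ≤ R_t ≤ n ∏_{i ≤ t} U_i`.
Hitting `0` by time `T = ⌊ln n / 100⌋` therefore forces `∏_{i ≤ T} U_i ≤ T / n`, and Markov's
inequality for `∏_{i ≤ T} U_i^{-1/2}` (each factor has mean `2`) bounds the probability of this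
by `2^T √(T/n) ≤ 1 / ln n`.
Because `hitZ` is `sInf ∅ = 0` on paths that never reach `0`, these paths must be shown to be
null as well: `R_t ≠ 0` forces `∏_{i ≤ t} U_i ≥ 1/n`, which has probability at most `n 2^{-t}`. -/

open Set
open scoped ENNReal Topology

section Chain

variable {Ω : Type*} {U : ℕ → Ω → ℝ} {n : ℕ} {ω : Ω}

lemma chainR_le_mul_prod (hU : ∀ i, 0 ≤ U i ω) (t : ℕ) :
    (chainR n U t ω : ℝ) ≤ n * ∏ i ∈ Finset.Icc 1 t, U i ω := by
  induction t with
  | zero => simp [chainR]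
  | succ t ih =>
    rw [Finset.prod_Icc_succ_top (by omega), ← mul_assoc]
    calc (chainR n U (t + 1) ω : ℝ) ≤ chainR n U t ω * U (t + 1) ω :=
          Nat.floor_le (mul_nonneg (Nat.cast_nonneg _) (hU _))
      _ ≤ _ := mul_le_mul_of_nonneg_right ih (hU _)

lemma mul_prod_le_chainR_add (hU : ∀ i, U i ω ∈ Icc (0 : ℝ) 1) (t : ℕ) :
    n * ∏ i ∈ Finset.Icc 1 t, U i ω ≤ chainR n U t ω + t := by
  induction t with
  | zero => simp [chainR]
  | succ t ih =>
    obtain ⟨hU₀, hU₁⟩ := hU (t + 1)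
    have hfloor : (chainR n U t ω : ℝ) * U (t + 1) ω < chainR n U (t + 1) ω + 1 :=
      Nat.lt_floor_add_one _
    rw [Finset.prod_Icc_succ_top (by omega), ← mul_assoc]
    push_cast
    nlinarith [mul_le_mul_of_nonneg_right ih hU₀, (Nat.cast_nonneg t : (0 : ℝ) ≤ t)]

lemma chainR_eq_zero_of_le {s t : ℕ} (h : chainR n U s ω = 0) (hst : s ≤ t) :
    chainR n U t ω = 0 := by
  induction t, hst using Nat.le_induction with
  | base => exact h
  | succ t _ ih => simp [chainR, ih]

lemma chainR_eq_zero_of_hitZ_le (h : ∃ t, chainR n U t ω = 0) {T : ℕ} (hT : hitZ n U ω ≤ T) :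
    chainR n U T ω = 0 :=
  chainR_eq_zero_of_le (Nat.sInf_mem h) hT

end Chain

section IndependentProduct

variable {Ω ι β : Type*} [MeasurableSpace Ω] [MeasurableSpace β] {μ : Measure Ω}

lemma ae_forall_mem_of_map_eq_restrict [Countable ι] {X : ι → Ω → β} {ν : Measure β}
    {s : Set β} (hs : MeasurableSet s) (hXm : ∀ i, Measurable (X i))
    (hlaw : ∀ i, μ.map (X i) = ν.restrict s) :
    ∀ᵐ ω ∂μ, ∀ i, X i ω ∈ s :=
  ae_all_iff.2 fun i => ae_of_ae_map (hXm i).aemeasurable <| by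
    rw [hlaw i]; exact ae_restrict_mem hs

lemma meas_prod_comp_ge_le_lintegral_pow_div {X : ι → Ω → β} {ν : Measure β}
    (hXm : ∀ i, Measurable (X i)) (hind : iIndepFun X μ) (hlaw : ∀ i, μ.map (X i) = ν)
    {g : β → ℝ≥0∞} (hg : Measurable g) (s : Finset ι) {a : ℝ≥0∞} (ha₀ : a ≠ 0) (ha : a ≠ ∞) :
    μ {ω | a ≤ ∏ i ∈ s, g (X i ω)} ≤ (∫⁻ x, g x ∂ν) ^ s.card / a := by
  have hgX : ∀ i, Measurable (fun ω => g (X i ω)) := fun i => hg.comp (hXm i)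
  have hlint : ∫⁻ ω, ∏ i ∈ s, g (X i ω) ∂μ = (∫⁻ x, g x ∂ν) ^ s.card := by
    rw [lintegral_prod_eq_prod_lintegral_of_indepFun s (fun i ω => g (X i ω))
      (hind.comp _ fun _ => hg) hgX, ← Finset.prod_const]
    refine Finset.prod_congr rfl fun i _ => ?_
    rw [← hlaw i, lintegral_map hg (hXm i)]
  rw [← hlint]
  exact meas_ge_le_lintegral_div (Finset.measurable_prod s fun i _ => hgX i).aemeasurable ha₀ ha

end IndependentProduct

lemma lintegral_Icc_ofReal : ∫⁻ u in Icc (0 : ℝ) 1, ENNReal.ofReal u = 2⁻¹ := by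
  rw [← ofReal_integral_eq_lintegral_ofReal, integral_Icc_eq_integral_Ioc,
    ← intervalIntegral.integral_of_le zero_le_one]
  · simp [integral_id]
  · exact continuous_id.integrableOn_Icc
  · exact ae_restrict_of_forall_mem measurableSet_Icc fun _ hu => hu.1

lemma lintegral_Icc_ofReal_rpow_neg_half :
    ∫⁻ u in Icc (0 : ℝ) 1, ENNReal.ofReal u ^ (-2⁻¹ : ℝ) = 2 := by
  rw [Measure.restrict_congr_set Ioc_ae_eq_Icc.symm,
    setLIntegral_congr_fun measurableSet_Ioc fun u hu => ENNReal.ofReal_rpow_of_pos hu.1]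
  rw [← ofReal_integral_eq_lintegral_ofReal, ← intervalIntegral.integral_of_le zero_le_one,
    integral_rpow (Or.inl (by norm_num))]
  · norm_num
  · exact (intervalIntegrable_iff_integrableOn_Ioc_of_le zero_le_one).1
      (intervalIntegral.intervalIntegrable_rpow' (by norm_num))
  · exact ae_restrict_of_forall_mem measurableSet_Ioc fun u hu => Real.rpow_nonneg hu.1.le _

section UniformChain

variable {Ω : Type*} [MeasurableSpace Ω] {μ : Measure Ω} {U : ℕ → Ω → ℝ}

lemma measure_chainR_ne_zero_le (hUm : ∀ i, Measurable (U i)) (hind : iIndepFun U μ)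
    (hmap : ∀ i, μ.map (U i) = volume.restrict (Icc 0 1)) {n : ℕ} (hn : n ≠ 0) (t : ℕ) :
    μ {ω | chainR n U t ω ≠ 0} ≤ 2⁻¹ ^ t * n := by
  have hsub : {ω | chainR n U t ω ≠ 0} ≤ᵐ[μ]
      {ω | (n : ℝ≥0∞)⁻¹ ≤ ∏ i ∈ Finset.Icc 1 t, ENNReal.ofReal (U i ω)} := by
    filter_upwards [ae_forall_mem_of_map_eq_restrict measurableSet_Icc hUm hmap]
      with ω hU (hω : chainR n U t ω ≠ 0)
    have h1 : (1 : ℝ) ≤ n * ∏ i ∈ Finset.Icc 1 t, U i ω :=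
      (Nat.one_le_cast.2 (Nat.one_le_iff_ne_zero.2 hω)).trans
        (chainR_le_mul_prod (fun i => (hU i).1) t)
    show (n : ℝ≥0∞)⁻¹ ≤ ∏ i ∈ Finset.Icc 1 t, ENNReal.ofReal (U i ω)
    rw [← ENNReal.ofReal_prod_of_nonneg fun i _ => (hU i).1, ← ENNReal.ofReal_natCast,
      ← ENNReal.ofReal_inv_of_pos (by positivity)]
    exact ENNReal.ofReal_le_ofReal ((inv_le_iff_one_le_mul₀' (by positivity)).2 h1)
  calc μ {ω | chainR n U t ω ≠ 0}
      ≤ μ {ω | (n : ℝ≥0∞)⁻¹ ≤ ∏ i ∈ Finset.Icc 1 t, ENNReal.ofReal (U i ω)} :=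
        measure_mono_ae hsub
    _ ≤ 2⁻¹ ^ t * n := by
        simpa [lintegral_Icc_ofReal, div_eq_mul_inv] using
          meas_prod_comp_ge_le_lintegral_pow_div hUm hind hmap ENNReal.measurable_ofReal
            (Finset.Icc 1 t) (a := (n : ℝ≥0∞)⁻¹) (by simp) (by simpa using hn)

lemma measure_forall_chainR_ne_zero (hUm : ∀ i, Measurable (U i)) (hind : iIndepFun U μ)
    (hmap : ∀ i, μ.map (U i) = volume.restrict (Icc 0 1)) {n : ℕ} (hn : n ≠ 0) :
    μ {ω | ∀ t, chainR n U t ω ≠ 0} = 0 := by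
  have hlim : Tendsto (fun t : ℕ => (2⁻¹ : ℝ≥0∞) ^ t * n) atTop (𝓝 0) := by
    simpa using ENNReal.Tendsto.mul_const (ENNReal.tendsto_pow_atTop_nhds_zero_of_lt_one
      (by norm_num)) (Or.inr (ENNReal.natCast_ne_top n))
  refine nonpos_iff_eq_zero.1 (ge_of_tendsto' hlim fun t => ?_)
  exact (measure_mono fun ω (hω : ∀ t, chainR n U t ω ≠ 0) => hω t).trans
    (measure_chainR_ne_zero_le hUm hind hmap hn t)

lemma measure_chainR_eq_zero_le (hUm : ∀ i, Measurable (U i)) (hind : iIndepFun U μ)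
    (hmap : ∀ i, μ.map (U i) = volume.restrict (Icc 0 1)) {n : ℕ} (hn : n ≠ 0) (T : ℕ) :
    μ {ω | chainR n U T ω = 0} ≤ ENNReal.ofReal (2 ^ T * √(T / n)) := by
  rcases Nat.eq_zero_or_pos T with rfl | hT
  · simp [chainR, hn]
  set z := ENNReal.ofReal (T / n)
  have hsub : {ω | chainR n U T ω = 0} ≤ᵐ[μ]
      {ω | z ^ (-2⁻¹ : ℝ) ≤ ∏ i ∈ Finset.Icc 1 T, ENNReal.ofReal (U i ω) ^ (-2⁻¹ : ℝ)} := by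
    filter_upwards [ae_forall_mem_of_map_eq_restrict measurableSet_Icc hUm hmap]
      with ω hU (hω : chainR n U T ω = 0)
    show z ^ (-2⁻¹ : ℝ) ≤ ∏ i ∈ Finset.Icc 1 T, ENNReal.ofReal (U i ω) ^ (-2⁻¹ : ℝ)
    have hprod : ∏ i ∈ Finset.Icc 1 T, U i ω ≤ T / n := by
      have := mul_prod_le_chainR_add (n := n) hU T
      rw [hω, Nat.cast_zero, zero_add] at this
      rwa [le_div_iff₀ (by positivity), mul_comm]
    rw [ENNReal.prod_rpow_of_ne_top (fun _ _ => ENNReal.ofReal_ne_top),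
      ← ENNReal.ofReal_prod_of_nonneg (fun i _ => (hU i).1), ENNReal.rpow_neg, ENNReal.rpow_neg]
    exact ENNReal.inv_le_inv.2
      (ENNReal.rpow_le_rpow (ENNReal.ofReal_le_ofReal hprod) (by norm_num))
  have hz : z ≠ 0 := (ENNReal.ofReal_pos.2 (by positivity)).ne'
  calc μ {ω | chainR n U T ω = 0}
      ≤ μ {ω | z ^ (-2⁻¹ : ℝ) ≤ ∏ i ∈ Finset.Icc 1 T, ENNReal.ofReal (U i ω) ^ (-2⁻¹ : ℝ)} :=
        measure_mono_ae hsub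
    _ ≤ 2 ^ T / z ^ (-2⁻¹ : ℝ) := by
        simpa [lintegral_Icc_ofReal_rpow_neg_half] using
          meas_prod_comp_ge_le_lintegral_pow_div hUm hind hmap
            (ENNReal.measurable_ofReal.pow_const (-2⁻¹ : ℝ)) (Finset.Icc 1 T)
            (a := z ^ (-2⁻¹ : ℝ))
            (by simp [ENNReal.rpow_neg, z]) (by simp [ENNReal.rpow_neg, hz])
    _ = ENNReal.ofReal (2 ^ T * √(T / n)) := by
        rw [ENNReal.rpow_neg, div_eq_mul_inv, inv_inv, ENNReal.ofReal_mul (by positivity),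
          ENNReal.ofReal_pow zero_le_two, ENNReal.ofReal_ofNat, Real.sqrt_eq_rpow,
          ← ENNReal.ofReal_rpow_of_nonneg (by positivity) (by norm_num)]
        norm_num [z]

end UniformChain

lemma two_pow_mul_sqrt_div_exp_le {x : ℝ} (hx : 0 < x) {T : ℕ} (hT : (T : ℝ) ≤ x / 100) :
    2 ^ T * √(T / Real.exp x) ≤ 1 / x := by
  have hcube : x ^ 3 ≤ 100 * Real.exp (49 / 50 * x) := by
    have := Real.pow_div_factorial_le_exp (49 / 50 * x) (by positivity) 3
    norm_num [Nat.factorial] at this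
    nlinarith [pow_pos hx 3]
  have hpow : (2 : ℝ) ^ T ≤ Real.exp (x / 100) := calc
    (2 : ℝ) ^ T ≤ Real.exp 1 ^ T :=
        pow_le_pow_left₀ zero_le_two (by linarith [Real.add_one_le_exp 1]) T
    _ = Real.exp T := by rw [← Real.exp_nat_mul, mul_one]
    _ ≤ Real.exp (x / 100) := Real.exp_le_exp.2 hT
  have hexp : Real.exp x = Real.exp (x / 100) ^ 2 * Real.exp (49 / 50 * x) := by
    rw [sq, ← Real.exp_add, ← Real.exp_add]
    ring_nf
  have hsq : (2 ^ T * √(T / Real.exp x)) ^ 2 ≤ (1 / x) ^ 2 := calc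
    (2 ^ T * √(T / Real.exp x)) ^ 2 = ((2 : ℝ) ^ T) ^ 2 * (T / Real.exp x) := by
        rw [mul_pow, Real.sq_sqrt (by positivity)]
    _ ≤ Real.exp (x / 100) ^ 2 * (x / 100 / Real.exp x) := by gcongr
    _ = x / (100 * Real.exp (49 / 50 * x)) := by
        rw [hexp]
        field_simp
    _ ≤ (1 / x) ^ 2 := by
        rw [div_pow, one_pow, div_le_div_iff₀ (by positivity) (by positivity)]
        nlinarith
  exact (pow_le_pow_iff_left₀ (by positivity) (by positivity) two_ne_zero).1 hsq

/-- There is a universal constant `c > 0` such that for every integer `n ≥ 2`,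
`P(Z < c · ln n) ≤ 1 / ln n`. -/
theorem cdp_lower_tail_bound :
    ∃ c : ℝ, 0 < c ∧
      ∀ (Ω : Type) (_ : MeasureSpace Ω) (_ : IsProbabilityMeasure (ℙ : Measure Ω))
        (U : ℕ → Ω → ℝ), (∀ i, Measurable (U i)) →
        iIndepFun U ℙ →
        (∀ i, Measure.map (U i) ℙ = (volume : Measure ℝ).restrict (Set.Icc 0 1)) →
        ∀ n : ℕ, 2 ≤ n →
          (ℙ {ω | (hitZ n U ω : ℝ) < c * Real.log n}).toReal ≤ 1 / Real.log n := by
  refine ⟨100⁻¹, by norm_num, fun Ω _ _ U hUm hind hmap n hn => ?_⟩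
  have hlog : 0 < Real.log n := Real.log_pos (by exact_mod_cast hn)
  set T := ⌊100⁻¹ * Real.log n⌋₊
  have hT : (T : ℝ) ≤ Real.log n / 100 := by
    simpa [div_eq_inv_mul] using Nat.floor_le (by positivity : 0 ≤ 100⁻¹ * Real.log n)
  have hsub : {ω | (hitZ n U ω : ℝ) < 100⁻¹ * Real.log n} ⊆
      {ω | chainR n U T ω = 0} ∪ {ω | ∀ t, chainR n U t ω ≠ 0} := by
    intro ω hω
    by_cases h : ∃ t, chainR n U t ω = 0
    · exact Or.inl (chainR_eq_zero_of_hitZ_le h (Nat.le_floor hω.le))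
    · exact Or.inr (not_exists.1 h)
  refine ENNReal.toReal_le_of_le_ofReal (by positivity) ?_
  calc ℙ {ω | (hitZ n U ω : ℝ) < 100⁻¹ * Real.log n}
      ≤ ℙ {ω | chainR n U T ω = 0} + ℙ {ω | ∀ t, chainR n U t ω ≠ 0} :=
        (measure_mono hsub).trans (measure_union_le _ _)
    _ ≤ ENNReal.ofReal (2 ^ T * √(T / n)) + 0 := by
        gcongr
        · exact measure_chainR_eq_zero_le hUm hind hmap (by omega) T
        · exact (measure_forall_chainR_ne_zero hUm hind hmap (by omega)).le
    _ ≤ ENNReal.ofReal (1 / Real.log n) := by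
        rw [add_zero]
        refine ENNReal.ofReal_le_ofReal ?_
        simpa [Real.exp_log (by positivity : (0 : ℝ) < n)] using
          two_pow_mul_sqrt_div_exp_le hlog hT
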